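/- Early recovery principle: if P is a set of facts and U is a consistent set of facts that solves all conflicts in P, then the dynamic logic program ⟨P, U⟩ has at least one extended WS-model and at least one extended RD-model, i.e. WS'(⟨P, U⟩) ≠ ∅ and RD'(⟨P, U⟩) ≠ ∅. -/
import Mathlib


namespace RuleUpdates

/-- Objective literal: an atom (a natural number) or its strong negation. -/
inductive OLit where
  | pos : ℕ → OLit
  | neg : ℕ → OLit
deriving DecidableEq

/-- Strong negation on objective literals (with ¬¬p identified with p). -/
def OLit.compl : OLit → OLit
  | .pos p => .neg p
  | .neg p => .pos p

/-- Literal: an objective literal or its default negation (not not l = l). -/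
inductive Lit where
  | obj : OLit → Lit
  | ndef : OLit → Lit
deriving DecidableEq

/-- Extended rule: a head literal and a finite set of body literals. -/
structure Rule where
  head : Lit
  body : Finset Lit

/-- Interpretation: a consistent set of objective literals. -/
def Interp (J : Set OLit) : Prop :=
  ∀ p : ℕ, ¬ (OLit.pos p ∈ J ∧ OLit.neg p ∈ J)

/-- Satisfaction of a literal. -/
def satLit (J : Set OLit) : Lit → Prop
  | .obj l => l ∈ J
  | .ndef l => l ∉ J

/-- Satisfaction of a set of body literals. -/
def satBody (J : Set OLit) (B : Finset Lit) : Prop :=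
  ∀ L ∈ B, satLit J L

/-- Satisfaction of a rule. -/
def satRule (J : Set OLit) (π : Rule) : Prop :=
  satBody J π.body → satLit J π.head

/-- J is a model of a program. -/
def isModel (J : Set OLit) (P : Set Rule) : Prop :=
  ∀ π ∈ P, satRule J π

/-- J* = J ∪ { not l | l ∈ ℒ ∖ J }, as a set of literals. -/
def star (J : Set OLit) : Set Lit :=
  {L | ∃ l : OLit, (L = Lit.obj l ∧ l ∈ J) ∨ (L = Lit.ndef l ∧ l ∉ J)}

/-- def(J) = { (not l.) | l ∈ ℒ ∖ J }. -/
def defFacts (J : Set OLit) : Set Rule :=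
  {π | ∃ l : OLit, l ∉ J ∧ π = ⟨Lit.ndef l, ∅⟩}

/-- S (a set of literals) is closed under program P, all literals
treated as distinct propositional atoms. -/
def closedUnder (P : Set Rule) (S : Set Lit) : Prop :=
  ∀ π ∈ P, (π.body : Set Lit) ⊆ S → π.head ∈ S

/-- least(P): the least model of P when all literals are treated as
distinct propositional atoms. -/
def leastModel (P : Set Rule) : Set Lit :=
  ⋂₀ {S | closedUnder P S}

/-- Stable model of an extended program: J* = least(P ∪ def(J)). -/
def isStableModel (P : Set Rule) (J : Set OLit) : Prop :=
  Interp J ∧ star J = leastModel (P ∪ defFacts J)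

/-- Level of a literal, with ℓ(not l) = ℓ(l). -/
def litLevel (ℓ : OLit → ℕ) : Lit → ℕ
  | .obj l => ℓ l
  | .ndef l => ℓ l

/-- ℓ↑(S): the maximal level of a literal in the finite set S. -/
def supLevel (ℓ : OLit → ℕ) (S : Finset Lit) : ℕ :=
  S.sup (litLevel ℓ)

/-- ℓ↓(S): the minimal level of a literal in the finite set S. -/
noncomputable def infLevel (ℓ : OLit → ℕ) (S : Finset Lit) : ℕ :=
  sInf (litLevel ℓ '' (S : Set Lit))

/-- Well-supported model of an extended program w.r.t. a level mapping ℓ. -/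
def isWSModelWith (P : Set Rule) (J : Set OLit) (ℓ : OLit → ℕ) : Prop :=
  isModel J P ∧
    ∀ l ∈ J, ∃ π ∈ P, π.head = Lit.obj l ∧ satBody J π.body ∧
      supLevel ℓ π.body < ℓ l

/-- Well-supported model of an extended program. -/
def isWSModel (P : Set Rule) (J : Set OLit) : Prop :=
  Interp J ∧ ∃ ℓ : OLit → ℕ, isWSModelWith P J ℓ

/-- con(L): the literals in conflict with L. -/
def con : Lit → Finset Lit
  | .obj l => {Lit.ndef l, Lit.obj l.compl}
  | .ndef l => {Lit.obj l}

/-- ρ(P): all rules occurring in the components of the DLP. -/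
def allRules {n : ℕ} (P : Fin n → Set Rule) : Set Rule :=
  {π | ∃ i : Fin n, π ∈ P i}

/-- The rule π ∈ P i is rejected w.r.t. the set of literals S:
some later σ with conflicting head has its body included in S. -/
def rejIn {n : ℕ} (P : Fin n → Set Rule) (S : Set Lit) (i : Fin n) (π : Rule) : Prop :=
  ∃ j : Fin n, i < j ∧ ∃ σ ∈ P j, σ.head ∈ con π.head ∧ (σ.body : Set Lit) ⊆ S

/-- rem(P, S) = ρ(P) ∖ rej(P, S), as a set of component-indexed rules. -/
def remSet {n : ℕ} (P : Fin n → Set Rule) (S : Set Lit) : Set (Fin n × Rule) :=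
  {x | x.2 ∈ P x.1 ∧ ¬ rejIn P S x.1 x.2}

/-- The operator T_{P,J}. -/
def TOp {n : ℕ} (P : Fin n → Set Rule) (J : Set OLit) (S : Set Lit) : Set Lit :=
  {L | ((∃ x ∈ remSet P (star J), x.2.head = L ∧ (x.2.body : Set Lit) ⊆ S) ∨
        (∃ l : OLit, l ∉ J ∧ L = Lit.ndef l)) ∧
       ¬ ∃ σ ∈ remSet P S, σ.2.head ∈ con L ∧ (σ.2.body : Set Lit) ⊆ star J}

/-- Iterates of T_{P,J} starting from ∅. -/
def TIter {n : ℕ} (P : Fin n → Set Rule) (J : Set OLit) : ℕ → Set Lit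
  | 0 => ∅
  | k + 1 => TOp P J (TIter P J k)

/-- Extended RD-model of a DLP: J* = ⋃_{k≥0} T_{P,J}^k(∅). -/
def isExtRD {n : ℕ} (P : Fin n → Set Rule) (J : Set OLit) : Prop :=
  Interp J ∧ star J = ⋃ k : ℕ, TIter P J k

/-- rej^ℓ(P, J): π ∈ P i is rejected w.r.t. J and the level mapping ℓ. -/
def rejLvl {n : ℕ} (P : Fin n → Set Rule) (J : Set OLit) (ℓ : OLit → ℕ)
    (i : Fin n) (π : Rule) : Prop :=
  ∃ j : Fin n, i < j ∧ ∃ σ ∈ P j, σ.head ∈ con π.head ∧ satBody J σ.body ∧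
    supLevel ℓ σ.body < infLevel ℓ (con π.head)

/-- Extended WS-model of a DLP. -/
def isExtWS {n : ℕ} (P : Fin n → Set Rule) (J : Set OLit) : Prop :=
  Interp J ∧ ∃ ℓ : OLit → ℕ,
    (∀ i : Fin n, ∀ π ∈ P i, ¬ rejLvl P J ℓ i π → satRule J π) ∧
    (∀ l ∈ J, ∃ x ∈ remSet P (star J), x.2.head = Lit.obj l ∧ satBody J x.2.body ∧
      supLevel ℓ x.2.body < ℓ l)

/-- A program is acyclic w.r.t. a level mapping ℓ. -/
def acyclicWrt (Q : Set Rule) (ℓ : OLit → ℕ) : Prop :=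
  (∀ l : OLit, ℓ l = ℓ l.compl) ∧ ∀ π ∈ Q, supLevel ℓ π.body < litLevel ℓ π.head

/- ---------- auxiliary material for the proof ---------- -/

lemma OLit.compl_compl' (l : OLit) : l.compl.compl = l := by cases l <;> rfl

lemma mem_con_obj {L : Lit} {l : OLit} :
    L ∈ con (Lit.obj l) ↔ L = Lit.ndef l ∨ L = Lit.obj l.compl := by
  simp [con]

lemma mem_con_ndef {L : Lit} {l : OLit} :
    L ∈ con (Lit.ndef l) ↔ L = Lit.obj l := by
  simp [con]

lemma con_nonempty (L : Lit) : (con L).Nonempty := by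
  cases L <;> simp [con]

/-- The candidate interpretation. -/
def Jd (P U : Set Rule) : Set OLit :=
  {l | ((∃ σ ∈ U, σ.head = Lit.obj l) ∨ (∃ σ ∈ P, σ.head = Lit.obj l)) ∧
    ∀ σ ∈ U, σ.head ∉ con (Lit.obj l)}

/-- Characterization of the remainder of ⟨P, U⟩ (for facts it does not
depend on the set of literals). -/
def Remd (P U : Set Rule) (x : Fin 2 × Rule) : Prop :=
  (x.1 = 1 ∧ x.2 ∈ U) ∨ (x.1 = 0 ∧ x.2 ∈ P ∧ ∀ σ ∈ U, σ.head ∉ con x.2.head)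

lemma fin2_cases (i : Fin 2) : i = 0 ∨ i = 1 := by
  fin_cases i
  · exact Or.inl rfl
  · exact Or.inr rfl

lemma fin2_lt {i j : Fin 2} (h : i < j) : i = 0 ∧ j = 1 := by
  fin_cases i <;> fin_cases j <;> simp_all

lemma remSet_eq (P U : Set Rule) (hUfacts : ∀ π ∈ U, π.body = ∅) (S : Set Lit) :
    remSet ![P, U] S = {x | Remd P U x} := by
  ext x
  obtain ⟨i, π⟩ := x
  simp only [remSet, rejIn, Set.mem_setOf_eq, Remd]
  rcases fin2_cases i with rfl | rfl
  · simp only [Matrix.cons_val_zero]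
    constructor
    · rintro ⟨hπ, hrej⟩
      refine Or.inr ⟨by trivial, hπ, ?_⟩
      intro σ hσ hc
      exact hrej ⟨1, by decide, σ, by simp [hσ], hc, by rw [hUfacts σ hσ]; simp⟩
    · rintro (⟨h01, _⟩ | ⟨-, hπ, hnr⟩)
      · exact absurd h01 (by decide)
      · refine ⟨hπ, ?_⟩
        rintro ⟨j, hj, σ, hσ, hc, -⟩
        obtain ⟨-, rfl⟩ := fin2_lt hj
        rw [show (![P, U] 1) = U by simp] at hσ
        exact hnr σ hσ hc
  · simp only [Matrix.cons_val_one, Matrix.head_cons]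
    constructor
    · rintro ⟨hπ, -⟩; exact Or.inl ⟨by trivial, hπ⟩
    · rintro (⟨-, hπ⟩ | ⟨h10, -⟩)
      · refine ⟨hπ, ?_⟩
        rintro ⟨j, hj, -⟩
        obtain ⟨h, -⟩ := fin2_lt hj
        exact absurd h (by decide)
      · exact absurd h10 (by decide)

lemma infLevel_con (H : Lit) : infLevel (fun _ => 1) (con H) = 1 := by
  unfold infLevel
  have h : litLevel (fun _ : OLit => 1) '' ((con H : Finset Lit) : Set Lit) = {1} := by
    apply Set.Subset.antisymm
    · rintro y ⟨L, -, rfl⟩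
      cases L <;> rfl
    · rintro y hy
      rw [Set.mem_singleton_iff] at hy; subst hy
      obtain ⟨L, hL⟩ := con_nonempty H
      exact ⟨L, by simpa using hL, by cases L <;> rfl⟩
  rw [h]
  exact csInf_singleton 1

lemma supLevel_empty (ℓ : OLit → ℕ) : supLevel ℓ ∅ = 0 := by
  simp [supLevel]

lemma satBody_empty (J : Set OLit) : satBody J ∅ := by
  intro L hL
  exact absurd hL (Finset.notMem_empty L)

/-- early recovery principle. -/
theorem early_recovery (P U : Set Rule)
    (hPfacts : ∀ π ∈ P, π.body = ∅)
    (hUfacts : ∀ π ∈ U, π.body = ∅)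
    (hUcons : ∃ J : Set OLit, Interp J ∧ isModel J U)
    (hsolve : ∀ π ∈ P, ∀ σ ∈ P, σ.head ∈ con π.head →
      ∃ ρ ∈ U, ρ.head ∈ con π.head ∨ ρ.head ∈ con σ.head) :
    {J : Set OLit | isExtWS ![P, U] J}.Nonempty ∧
    {J : Set OLit | isExtRD ![P, U] J}.Nonempty := by
  classical
  obtain ⟨J0, hJ0i, hJ0m⟩ := hUcons
  have hUsat : ∀ σ ∈ U, satLit J0 σ.head := by
    intro σ hσ
    refine hJ0m σ hσ ?_
    rw [hUfacts σ hσ]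
    exact satBody_empty J0
  have hJ0c : ∀ l : OLit, l ∈ J0 → l.compl ∈ J0 → False := by
    intro l h1 h2
    cases l with
    | pos p => exact hJ0i p ⟨h1, h2⟩
    | neg p => exact hJ0i p ⟨h2, h1⟩
  -- if obj l is a U head then no U head conflicts with obj l
  have hUNR : ∀ l : OLit, (∃ σ ∈ U, σ.head = Lit.obj l) →
      ∀ σ ∈ U, σ.head ∉ con (Lit.obj l) := by
    rintro l ⟨σ, hσU, hσh⟩ τ hτU hmem
    have h1 : l ∈ J0 := by have := hUsat σ hσU; rwa [hσh] at this
    rcases mem_con_obj.mp hmem with h | h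
    · have := hUsat τ hτU; rw [h] at this; exact this h1
    · have := hUsat τ hτU; rw [h] at this; exact hJ0c l h1 this
  set J : Set OLit := Jd P U with hJdef
  have hJmem : ∀ l : OLit, l ∈ J ↔
      (((∃ σ ∈ U, σ.head = Lit.obj l) ∨ (∃ σ ∈ P, σ.head = Lit.obj l)) ∧
        ∀ σ ∈ U, σ.head ∉ con (Lit.obj l)) := by
    intro l; rw [hJdef]; rfl
  -- (B) heads of remainder rules that are objective are in J
  have hB : ∀ x, Remd P U x → ∀ l, x.2.head = Lit.obj l → l ∈ J := by
    rintro x (⟨-, hxU⟩ | ⟨-, hxP, hxnr⟩) l hh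
    · exact (hJmem l).mpr ⟨Or.inl ⟨x.2, hxU, hh⟩, hUNR l ⟨x.2, hxU, hh⟩⟩
    · exact (hJmem l).mpr ⟨Or.inr ⟨x.2, hxP, hh⟩, by rw [← hh]; exact hxnr⟩
  -- (A) every element of J is the head of a remainder fact
  have hA : ∀ l ∈ J, ∃ x, Remd P U x ∧ x.2.head = Lit.obj l ∧ x.2.body = ∅ := by
    intro l hl
    obtain ⟨hw, hnr⟩ := (hJmem l).mp hl
    rcases hw with ⟨σ, hσU, hσh⟩ | ⟨σ, hσP, hσh⟩
    · exact ⟨(1, σ), Or.inl ⟨rfl, hσU⟩, hσh, hUfacts σ hσU⟩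
    · exact ⟨(0, σ), Or.inr ⟨rfl, hσP, by rw [hσh]; exact hnr⟩, hσh, hPfacts σ hσP⟩
  -- (C) no remainder rule head conflicts with an element of J
  have hC : ∀ l ∈ J, ∀ x, Remd P U x → x.2.head ∉ con (Lit.obj l) := by
    intro l hl x hx hmem
    obtain ⟨hw, hnr⟩ := (hJmem l).mp hl
    rcases hx with ⟨-, hxU⟩ | ⟨-, hxP, hxnr⟩
    · exact hnr x.2 hxU hmem
    · rcases hw with ⟨σ, hσU, hσh⟩ | ⟨σ, hσP, hσh⟩
      · -- obj l is a U head, hence it conflicts with x.2.head, rejecting x.2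
        apply hxnr σ hσU
        rcases mem_con_obj.mp hmem with h | h
        · rw [h]; exact mem_con_ndef.mpr hσh
        · rw [h]
          refine mem_con_obj.mpr (Or.inr ?_)
          rw [hσh, OLit.compl_compl']
      · -- obj l is a P head: use that U solves all conflicts
        obtain ⟨ρ, hρU, hρc⟩ := hsolve σ hσP x.2 hxP (by rw [hσh]; exact hmem)
        rcases hρc with h | h
        · exact hnr ρ hρU (by rwa [hσh] at h)
        · exact hxnr ρ hρU h
  have hInterp : Interp J := by
    rintro p ⟨h1, h2⟩
    obtain ⟨x, hx, hxh, -⟩ := hA (OLit.pos p) h1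
    exact hC (OLit.neg p) h2 x hx (by rw [hxh]; exact mem_con_obj.mpr (Or.inr rfl))
  -- every remainder rule head is satisfied by J
  have hsatrem : ∀ x, Remd P U x → satLit J x.2.head := by
    intro x hx
    cases hh : x.2.head with
    | obj l => exact hB x hx l hh
    | ndef l =>
      show l ∉ J
      intro hlJ
      exact hC l hlJ x hx (by rw [hh]; exact mem_con_obj.mpr (Or.inl rfl))
  have hrem := remSet_eq P U hUfacts
  -- rejected P rules are level-rejected w.r.t. the constant level mapping 1
  have hrejP : ∀ π, (∃ σ ∈ U, σ.head ∈ con π.head) →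
      rejLvl ![P, U] J (fun _ => 1) 0 π := by
    rintro π ⟨σ, hσU, hσc⟩
    refine ⟨1, by decide, σ, by simpa using hσU, hσc, ?_, ?_⟩
    · rw [hUfacts σ hσU]; exact satBody_empty J
    · rw [hUfacts σ hσU, supLevel_empty, infLevel_con]
      exact Nat.zero_lt_one
  -- the key fixpoint property for RD
  have hT : ∀ S, TOp ![P, U] J S = star J := by
    intro S
    ext L
    simp only [TOp, Set.mem_setOf_eq, hrem]
    constructor
    · rintro ⟨hd, hnc⟩
      rcases hd with ⟨x, hx, hxh, -⟩ | ⟨l, hl, rfl⟩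
      · cases L with
        | obj l => exact ⟨l, Or.inl ⟨rfl, hB x hx l hxh⟩⟩
        | ndef l =>
          refine ⟨l, Or.inr ⟨rfl, ?_⟩⟩
          intro hlJ
          obtain ⟨y, hy, hyh, hyb⟩ := hA l hlJ
          exact hnc ⟨y, hy, by rw [hyh]; exact mem_con_ndef.mpr rfl,
            by rw [hyb]; simp⟩
      · exact ⟨l, Or.inr ⟨rfl, hl⟩⟩
    · rintro ⟨l, (⟨rfl, hl⟩ | ⟨rfl, hl⟩)⟩
      · obtain ⟨x, hx, hxh, hxb⟩ := hA l hl
        refine ⟨Or.inl ⟨x, hx, hxh, by rw [hxb]; simp⟩, ?_⟩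
        rintro ⟨σ, hσ, hσc, -⟩
        exact hC l hl σ hσ hσc
      · refine ⟨Or.inr ⟨l, hl, rfl⟩, ?_⟩
        rintro ⟨σ, hσ, hσc, -⟩
        exact hl (hB σ hσ l (mem_con_ndef.mp hσc))
  constructor
  · -- WS part
    refine ⟨J, hInterp, fun _ => 1, ?_, ?_⟩
    · intro i π hπ hnrej
      intro _hb
      rcases fin2_cases i with rfl | rfl
      · have hπP : π ∈ P := by simpa using hπ
        have hunrej : ∀ σ ∈ U, σ.head ∉ con π.head := by
          intro σ hσ hc
          exact hnrej (hrejP π ⟨σ, hσ, hc⟩)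
        exact hsatrem (0, π) (Or.inr ⟨rfl, hπP, hunrej⟩)
      · have hπU : π ∈ U := by simpa using hπ
        exact hsatrem (1, π) (Or.inl ⟨rfl, hπU⟩)
    · intro l hl
      obtain ⟨x, hx, hxh, hxb⟩ := hA l hl
      refine ⟨x, by rw [hrem]; exact hx, hxh, ?_, ?_⟩
      · rw [hxb]; exact satBody_empty J
      · rw [hxb, supLevel_empty]; exact Nat.zero_lt_one
  · -- RD part
    refine ⟨J, hInterp, ?_⟩
    have hTi : ∀ k, TIter ![P, U] J (k + 1) = star J := fun k => hT _
    apply Set.Subset.antisymm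
    · rw [← hTi 0]
      exact Set.subset_iUnion (TIter ![P, U] J) 1
    · apply Set.iUnion_subset
      intro k
      cases k with
      | zero => simp [TIter]
      | succ k => rw [hTi k]

end RuleUpdates
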